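/- arXiv:2310.06002 — 2 statements merged into one kernel-verified Lean document; each statement's English description precedes it below -/
import Mathlib

section
/- Let μ, ν be probability measures on S^1 with μ absolutely continuous with respect to the Lebesgue measure on S^1, and let h:ℝ→ℝ₊ be convex increasing. If x_cut minimizes x₀ ↦ ∫₀¹ h(|F_{μ,x₀}^{-1}(x) − F_{ν,x₀}^{-1}(x)|) dx and α_{μ,ν} := F_μ(x_cut) − F_ν(x_cut), then for all x∈[0,1): F_{ν,x_cut}^{-1}(F_{μ,x_cut}(x − x_cut)) + x_cut = F_ν^{-1}(F_μ(x) − α_{μ,ν}). -/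
open MeasureTheory Set

noncomputable section

/-- Geodesic distance on the circle `ℝ/ℤ`, for representatives `x, y ∈ ℝ`:
`|x - y|_{S¹} = min_{k ∈ ℤ} |x - y + k|`. -/
def circleDist (x y : ℝ) : ℝ := ⨅ k : ℤ, |x - y + (k : ℝ)|

/-- The CDF of a circular probability measure (represented as a probability measure on `ℝ`
supported on `[0,1)`), extended to all of `ℝ` by `F(y + n) = F(y) + n`. -/
def cdf (μ : Measure ℝ) (y : ℝ) : ℝ := (μ (Ico 0 (Int.fract y))).toReal + (⌊y⌋ : ℝ)

/-- The quantile function `F_μ⁻¹(y) := inf {x | F_μ(x) > y}`. -/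
def quantile (μ : Measure ℝ) (y : ℝ) : ℝ := sInf {x : ℝ | cdf μ x > y}

/-- The CDF with respect to a reference (cutting) point `x₀`:
`F_{μ,x₀}(y) := F_μ(x₀ + y) - F_μ(x₀)`. -/
def cdfCut (μ : Measure ℝ) (x₀ y : ℝ) : ℝ := cdf μ (x₀ + y) - cdf μ x₀

/-- The quantile of the cut CDF: `F_{μ,x₀}⁻¹(y) := inf {x | F_{μ,x₀}(x) > y}`. -/
def quantileCut (μ : Measure ℝ) (x₀ y : ℝ) : ℝ := sInf {x : ℝ | cdfCut μ x₀ x > y}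

/-- The circular optimal transport cost `COT_h(μ,ν)` with ground cost `h (|x - y|_{S¹})`,
the infimum over all couplings of `μ` and `ν`. -/
def COT (h : ℝ → ℝ) (μ ν : Measure ℝ) : ℝ :=
  sInf {c : ℝ | ∃ γ : Measure (ℝ × ℝ), IsProbabilityMeasure γ ∧
    γ.map Prod.fst = μ ∧ γ.map Prod.snd = ν ∧
    c = ∫ p, h (circleDist p.1 p.2) ∂γ}

/-- The transport cost associated with cutting the circle at `x₀`:
`∫₀¹ h(|F_{μ,x₀}⁻¹(x) - F_{ν,x₀}⁻¹(x)|) dx`. -/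
def cutCost (h : ℝ → ℝ) (μ ν : Measure ℝ) (x₀ : ℝ) : ℝ :=
  ∫ x in (0:ℝ)..1, h |quantileCut μ x₀ x - quantileCut ν x₀ x|

/-- The transport cost associated with a shift `α`:
`∫₀¹ h(|F_μ⁻¹(x) - F_ν⁻¹(x - α)|) dx`. -/
def shiftCost (h : ℝ → ℝ) (μ ν : Measure ℝ) (α : ℝ) : ℝ :=
  ∫ x in (0:ℝ)..1, h |quantile μ x - quantile ν (x - α)|

/-- The circular Monge map determined by a cutting point `x_cut`:
`M_μ^ν(x) := F_{ν,x_cut}⁻¹(F_{μ,x_cut}(x - x_cut)) + x_cut`. -/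
def mongeMap (μ ν : Measure ℝ) (xcut : ℝ) (x : ℝ) : ℝ :=
  quantileCut ν xcut (cdfCut μ xcut (x - xcut)) + xcut

/-- The LCOT embedding of `ν` with respect to the reference `μ` and shift `α`:
`ν̂(x) := F_ν⁻¹(F_μ(x) - α) - x`. -/
def lcotEmbed (μ ν : Measure ℝ) (α : ℝ) (x : ℝ) : ℝ :=
  quantile ν (cdf μ x - α) - x

lemma sInf_shift' (T : Set ℝ) (hne : T.Nonempty) (hbd : BddBelow T) (a : ℝ) :
    sInf {z : ℝ | a + z ∈ T} + a = sInf T := by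
  obtain ⟨m, hm⟩ := hbd
  have hneS : {z : ℝ | a + z ∈ T}.Nonempty := by
    obtain ⟨w, hw⟩ := hne
    exact ⟨w - a, by simpa [show a + (w - a) = w by ring] using hw⟩
  have hbdS : BddBelow {z : ℝ | a + z ∈ T} :=
    ⟨m - a, fun z hz => by have := hm hz; linarith⟩
  apply le_antisymm
  · have : ∀ w ∈ T, sInf {z : ℝ | a + z ∈ T} + a ≤ w := by
      intro w hw
      have : sInf {z : ℝ | a + z ∈ T} ≤ w - a :=
        csInf_le hbdS (by simpa [show a + (w - a) = w by ring] using hw)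
      linarith
    exact le_csInf hne this
  · have h1 : sInf T - a ≤ sInf {z : ℝ | a + z ∈ T} :=
      le_csInf hneS (fun z hz => by have := csInf_le ⟨m, hm⟩ hz; linarith)
    linarith

lemma cdf_intCast (ν : Measure ℝ) (n : ℤ) : cdf ν (n : ℝ) = n := by
  simp [cdf, Int.fract_intCast]

lemma cdf_le (ν : Measure ℝ) [IsProbabilityMeasure ν] (w : ℝ) : cdf ν w ≤ w + 1 := by
  have h1 : (ν (Ico 0 (Int.fract w))).toReal ≤ 1 := by
    have := prob_le_one (μ := ν) (s := Ico 0 (Int.fract w))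
    simpa using ENNReal.toReal_mono ENNReal.one_ne_top this
  have h2 : (⌊w⌋ : ℝ) ≤ w := Int.floor_le w
  unfold cdf; linarith

/-- If `x_cut` minimizes the cut cost and
`α_{μ,ν} = F_μ(x_cut) - F_ν(x_cut)`, then for all `x ∈ [0,1)`,
`F_{ν,x_cut}⁻¹(F_{μ,x_cut}(x - x_cut)) + x_cut = F_ν⁻¹(F_μ(x) - α_{μ,ν})`. -/
theorem mongeMap_eq_shift_form
    (h : ℝ → ℝ) (hconv : ConvexOn ℝ univ h)
    (hmono : MonotoneOn h (Ici 0)) (hnonneg : ∀ x, 0 ≤ h x)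
    (μ ν : Measure ℝ) [IsProbabilityMeasure μ] [IsProbabilityMeasure ν]
    (hμ : μ (Ico 0 1) = 1) (hν : ν (Ico 0 1) = 1)
    (hac : μ ≪ volume)
    (xcut : ℝ) (hxcut : xcut ∈ Ico (0:ℝ) 1)
    (hmin : ∀ x₀ ∈ Ico (0:ℝ) 1, cutCost h μ ν xcut ≤ cutCost h μ ν x₀) :
    ∀ x ∈ Ico (0:ℝ) 1,
      mongeMap μ ν xcut x = quantile ν (cdf μ x - (cdf μ xcut - cdf ν xcut)) := by
  intro x _
  unfold mongeMap quantileCut cdfCut quantile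
  rw [show xcut + (x - xcut) = x by ring]
  set t : ℝ := cdf μ x - cdf μ xcut + cdf ν xcut with ht
  have hset1 : {z : ℝ | cdf ν (xcut + z) - cdf ν xcut > cdf μ x - cdf μ xcut}
      = {z : ℝ | xcut + z ∈ {w : ℝ | cdf ν w > t}} := by
    ext z
    simp only [mem_setOf_eq, ht]
    constructor <;> intro hz <;> linarith
  have hset2 : {w : ℝ | cdf ν w > cdf μ x - (cdf μ xcut - cdf ν xcut)}
      = {w : ℝ | cdf ν w > t} := by
    ext w; simp only [mem_setOf_eq, ht]
    constructor <;> intro hw <;> linarith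
  rw [hset1, hset2]
  apply sInf_shift'
  · refine ⟨((⌊t⌋ + 1 : ℤ) : ℝ), ?_⟩
    have := cdf_intCast ν (⌊t⌋ + 1)
    simp only [mem_setOf_eq, this]
    push_cast
    exact Int.lt_floor_add_one t
  · refine ⟨t - 1, fun w hw => ?_⟩
    have h1 : cdf ν w ≤ w + 1 := cdf_le ν w
    have h2 : t < cdf ν w := hw
    linarith
end
end

section
/- Let μ be a probability measure on S^1 absolutely continuous with respect to the Lebesgue measure on S^1, ν any probability measure on S^1, and h:ℝ→ℝ₊ convex increasing. The LCOT embedding ν̂^{μ,h} is invertible in the sense that ν = (ν̂^{μ,h} + id)_#μ, where id is the identity map and the sum is taken modulo ℤ. -/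
open MeasureTheory Set

noncomputable section

/-!
Reduced mod 1, the map `x ↦ ν̂(x) + x` factors as `x ↦ F_ν⁻¹(frac(F_μ(x) - α))`, because
`F_ν⁻¹(y + n) = F_ν⁻¹(y) + n` and `F_ν⁻¹` maps `[0,1)` into `[0,1)`. Each factor transports
measures explicitly. Since `μ` has no atoms, `F_μ ∘ F_μ⁻¹ = id` on `[0,1)`, so `F_μ` pushes `μ`
to Lebesgue measure on `[0,1)`; the rotation `y ↦ frac(y - α)` preserves that measure; and
`F_ν⁻¹` pushes it to `ν`, because `F_ν⁻¹(u) < t ↔ u < ν [0,t)`.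
-/

theorem measure_Iio_eq_iSup (m : Measure ℝ) (t : ℝ) :
    m (Iio t) = ⨆ x : Iio t, m (Iio (x : ℝ)) := by
  have : Nonempty (Iio t) := ⟨⟨t - 1, by simp⟩⟩
  rw [← Monotone.measure_iUnion (s := fun x : Iio t => Iio (x : ℝ))
    fun a b hab => Iio_subset_Iio hab]
  congr 1
  ext y
  simpa using ⟨fun hyt => (exists_between hyt).imp fun _ h => h.symm,
    fun ⟨x, hxt, hyx⟩ => hyx.trans hxt⟩

theorem measure_Iic_eq_iInf (m : Measure ℝ) [IsFiniteMeasure m] (q : ℝ) :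
    m (Iic q) = ⨅ t : Ioi q, m (Iio (t : ℝ)) := by
  have : Nonempty (Ioi q) := ⟨⟨q + 1, by simp⟩⟩
  rw [← Monotone.measure_iInter (s := fun t : Ioi q => Iio (t : ℝ))
    (fun a b hab => Iio_subset_Iio hab) (fun _ => measurableSet_Iio.nullMeasurableSet)
    ⟨this.some, measure_ne_top _ _⟩]
  congr 1
  ext y
  simp [forall_gt_iff_le]

theorem MeasureTheory.Measure.ext_of_Iio {α : Type*} [TopologicalSpace α] [MeasurableSpace α]
    [SecondCountableTopology α] [LinearOrder α] [OrderTopology α] [BorelSpace α]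
    (μ ν : Measure α) [IsProbabilityMeasure μ] [IsProbabilityMeasure ν]
    (h : ∀ a, μ (Iio a) = ν (Iio a)) : μ = ν :=
  Measure.ext_of_Ici μ ν fun a => by
    rw [← compl_Iio, prob_compl_eq_one_sub measurableSet_Iio,
      prob_compl_eq_one_sub measurableSet_Iio, h]

theorem map_add_right_volume_restrict_Ico (a b c : ℝ) :
    (volume.restrict (Ico a b)).map (· + c) = volume.restrict (Ico (a + c) (b + c)) := by
  simpa [preimage_add_const_Ico] using
    ((measurePreserving_add_right volume c).restrict_preimage
      (measurableSet_Ico (a := a + c) (b := b + c))).map_eq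

theorem map_fract_sub_volume_restrict_Ico (α : ℝ) :
    (volume.restrict (Ico (0 : ℝ) 1)).map (fun u => Int.fract (u - α)) =
      volume.restrict (Ico 0 1) := by
  set β := Int.fract α
  have hβ0 : 0 ≤ β := Int.fract_nonneg α
  have hβ1 : β < 1 := Int.fract_lt_one α
  have hfract : ∀ u, Int.fract (u - α) = Int.fract (u - β) := fun u => by
    rw [← Int.fract_sub_intCast (u - β) ⌊α⌋]
    congr 1
    linarith [Int.floor_add_fract α]
  have hlow : (volume.restrict (Ico 0 β)).map (fun u => Int.fract (u - α)) =
      volume.restrict (Ico (1 - β) 1) := by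
    rw [Measure.map_congr (g := (· + (1 - β))) <| ae_restrict_of_forall_mem measurableSet_Ico
      fun u hu => ?_, map_add_right_volume_restrict_Ico]
    · ring_nf
    · rw [hfract, ← Int.fract_add_one, Int.fract_eq_self.2 ⟨by linarith [hu.1], by linarith [hu.2]⟩]
      ring
  have hhigh : (volume.restrict (Ico β 1)).map (fun u => Int.fract (u - α)) =
      volume.restrict (Ico 0 (1 - β)) := by
    rw [Measure.map_congr (g := (· + -β)) <| ae_restrict_of_forall_mem measurableSet_Ico
      fun u hu => ?_, map_add_right_volume_restrict_Ico]
    · ring_nf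
    · rw [hfract, Int.fract_eq_self.2 ⟨by linarith [hu.1], by linarith [hu.2]⟩]
      ring
  have hmeas : Measurable fun u : ℝ => Int.fract (u - α) := (measurable_id.sub_const α).fract
  calc (volume.restrict (Ico (0 : ℝ) 1)).map (fun u => Int.fract (u - α))
      = (volume.restrict (Ico 0 β) + volume.restrict (Ico β 1)).map
          (fun u => Int.fract (u - α)) := by
        rw [← Measure.restrict_union Ico_disjoint_Ico_same measurableSet_Ico,
          Ico_union_Ico_eq_Ico hβ0 hβ1.le]
    _ = volume.restrict (Ico 0 (1 - β)) + volume.restrict (Ico (1 - β) 1) := by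
        rw [Measure.map_add _ _ hmeas, hlow, hhigh, add_comm]
    _ = volume.restrict (Ico 0 1) := by
        rw [← Measure.restrict_union Ico_disjoint_Ico_same measurableSet_Ico,
          Ico_union_Ico_eq_Ico (by linarith) (by linarith)]

section CircularCDF

variable (m : Measure ℝ)

theorem cdf_add_intCast (x : ℝ) (n : ℤ) : cdf m (x + n) = cdf m x + n := by
  simp only [cdf, Int.fract_add_intCast, Int.floor_add_intCast, Int.cast_add]
  ring

theorem floor_le_cdf (x : ℝ) : (⌊x⌋ : ℝ) ≤ cdf m x :=
  le_add_of_nonneg_left ENNReal.toReal_nonneg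

theorem nonempty_cdf_gt (u : ℝ) : {x | cdf m x > u}.Nonempty := by
  refine ⟨(⌊u⌋ + 1 : ℤ), ?_⟩
  have := floor_le_cdf m (⌊u⌋ + 1 : ℤ)
  rw [Int.floor_intCast] at this
  exact (show u < (⌊u⌋ + 1 : ℤ) by push_cast; exact Int.lt_floor_add_one u).trans_le this

variable [IsProbabilityMeasure m]

theorem cdf_le_floor_add_one (x : ℝ) : cdf m x ≤ ⌊x⌋ + 1 := by
  rw [cdf, add_comm]
  gcongr
  exact measureReal_le_one

theorem monotone_cdf : Monotone (cdf m) := by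
  intro x y hxy
  rcases (Int.floor_le_floor hxy).eq_or_lt with hfloor | hfloor
  · have hfract : Int.fract x ≤ Int.fract y := by
      rw [Int.fract, Int.fract, hfloor]; linarith
    simp only [cdf, hfloor]
    gcongr
    finiteness
  · calc cdf m x ≤ ⌊x⌋ + 1 := cdf_le_floor_add_one m x
      _ ≤ ⌊y⌋ := by exact_mod_cast hfloor
      _ ≤ cdf m y := floor_le_cdf m y

theorem measurable_cdf : Measurable (cdf m) := (monotone_cdf m).measurable

variable {m}

theorem measure_Iio_zero_of_measure_Ico_eq_one (hm : m (Ico 0 1) = 1) : m (Iio 0) = 0 := by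
  have hsub : Iio (0 : ℝ) ⊆ (Ico 0 1)ᶜ := fun _ hx hx' => hx'.1.not_gt hx
  exact measure_mono_null hsub ((prob_compl_eq_zero_iff measurableSet_Ico).2 hm)

theorem cdf_eq_measureReal_Iio (hm : m (Ico 0 1) = 1) {x : ℝ} (hx : x ∈ Ico (0 : ℝ) 1) :
    cdf m x = m.real (Iio x) := by
  have hIio : m (Ico 0 1 ∩ Iio x) = m (Ico 0 x) := by
    rw [Ico_inter_Iio, min_eq_right hx.2.le]
  rw [cdf, Int.fract_eq_self.2 hx, Int.floor_eq_zero_iff.2 hx, Measure.real, ← hIio, inter_comm,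
    measure_inter_conull ((prob_compl_eq_zero_iff measurableSet_Ico).2 hm)]
  simp

end CircularCDF

section CircularQuantile

variable (m : Measure ℝ) [IsProbabilityMeasure m]

theorem cdf_nonpos_of_neg {x : ℝ} (hx : x < 0) : cdf m x ≤ 0 := by
  have hfloor : ⌊x⌋ < 0 := Int.floor_lt.2 (by simpa using hx)
  have : (⌊x⌋ : ℝ) ≤ -1 := by exact_mod_cast Int.le_sub_one_of_lt hfloor
  linarith [cdf_le_floor_add_one m x]

theorem bddBelow_cdf_gt (u : ℝ) : BddBelow {x | cdf m x > u} :=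
  ⟨u - 1, fun x (hx : u < cdf m x) => by linarith [cdf_le_floor_add_one m x, Int.floor_le x]⟩

theorem monotone_quantile : Monotone (quantile m) := fun _ v huv =>
  csInf_le_csInf (bddBelow_cdf_gt m _) (nonempty_cdf_gt m v) fun _ hx => huv.trans_lt hx

theorem measurable_quantile : Measurable (quantile m) := (monotone_quantile m).measurable

theorem quantile_add_intCast (u : ℝ) (n : ℤ) : quantile m (u + n) = quantile m u + n := by
  have hset : {x | cdf m x > u + n} = OrderIso.addRight (n : ℝ) '' {x | cdf m x > u} := by
    ext x
    have hshift := cdf_add_intCast m (x - n) n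
    rw [sub_add_cancel] at hshift
    simp [← sub_eq_add_neg, hshift]
  rw [quantile, quantile, hset, ← OrderIso.map_csInf' _ (nonempty_cdf_gt m u)
    (bddBelow_cdf_gt m u)]
  rfl

theorem quantile_nonneg {u : ℝ} (hu : 0 ≤ u) : 0 ≤ quantile m u :=
  le_csInf (nonempty_cdf_gt m u) fun x (hx : u < cdf m x) =>
    not_lt.1 fun hx0 => (cdf_nonpos_of_neg m hx0).not_gt (hu.trans_lt hx)

variable {m}

theorem measure_Iio_eq_one_of_one_le (hm : m (Ico 0 1) = 1) {t : ℝ} (ht : 1 ≤ t) : m (Iio t) = 1 :=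
  le_antisymm prob_le_one (hm ▸ measure_mono (Ico_subset_Iio_self.trans (Iio_subset_Iio ht)))

theorem quantile_lt_iff (hm : m (Ico 0 1) = 1) {u t : ℝ} (hu : 0 ≤ u) (ht : t ≤ 1) :
    quantile m u < t ↔ u < m.real (Iio t) := by
  constructor
  · intro hq
    obtain ⟨x, hx, hxt⟩ := (csInf_lt_iff (bddBelow_cdf_gt m u) (nonempty_cdf_gt m u)).1 hq
    have hx0 : 0 ≤ x := not_lt.1 fun hx0 => (cdf_nonpos_of_neg m hx0).not_gt (hu.trans_lt hx)
    calc u < cdf m x := hx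
      _ = m.real (Iio x) := cdf_eq_measureReal_Iio hm ⟨hx0, hxt.trans_le ht⟩
      _ ≤ m.real (Iio t) := measureReal_mono (Iio_subset_Iio hxt.le)
  · intro hut
    have hlt : ENNReal.ofReal u < ⨆ x : Iio t, m (Iio (x : ℝ)) := by
      rw [← measure_Iio_eq_iSup, ← ofReal_measureReal]
      exact (ENNReal.ofReal_lt_ofReal_iff (hu.trans_lt hut)).2 hut
    obtain ⟨⟨x, hxt⟩, hux⟩ := lt_iSup_iff.1 hlt
    have hx0 : 0 ≤ x := not_lt.1 fun hx0 => by
      have hnull := measure_mono_null (Iio_subset_Iio hx0.le)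
        (measure_Iio_zero_of_measure_Ico_eq_one hm)
      simp [hnull] at hux
    have hcdf : u < cdf m x := by
      rw [cdf_eq_measureReal_Iio hm ⟨hx0, hxt.trans_le ht⟩]
      exact (ENNReal.ofReal_lt_iff_lt_toReal hu (measure_ne_top _ _)).1 hux
    exact (csInf_le (bddBelow_cdf_gt m u) hcdf).trans_lt hxt

theorem quantile_mem_Ico (hm : m (Ico 0 1) = 1) {u : ℝ} (hu : u ∈ Ico (0 : ℝ) 1) :
    quantile m u ∈ Ico (0 : ℝ) 1 :=
  ⟨quantile_nonneg m hu.1, (quantile_lt_iff hm hu.1 le_rfl).2 <| by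
    simpa [Measure.real, measure_Iio_eq_one_of_one_le hm le_rfl] using hu.2⟩

theorem fract_quantile (hm : m (Ico 0 1) = 1) (y : ℝ) :
    Int.fract (quantile m y) = quantile m (Int.fract y) := by
  have hshift := quantile_add_intCast m (Int.fract y) ⌊y⌋
  rw [Int.fract_add_floor] at hshift
  rw [hshift, Int.fract_add_intCast,
    Int.fract_eq_self.2 (quantile_mem_Ico hm ⟨Int.fract_nonneg y, Int.fract_lt_one y⟩)]

end CircularQuantile

section Pushforwards

variable {m : Measure ℝ} [IsProbabilityMeasure m]

theorem map_quantile (hm : m (Ico 0 1) = 1) :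
    (volume.restrict (Ico (0 : ℝ) 1)).map (quantile m) = m := by
  have : IsProbabilityMeasure (volume.restrict (Ico (0 : ℝ) 1)) := ⟨by simp⟩
  have := Measure.isProbabilityMeasure_map (μ := volume.restrict (Ico (0 : ℝ) 1))
    (measurable_quantile m).aemeasurable
  refine Measure.ext_of_Iio _ _ fun t => ?_
  rw [Measure.map_apply (measurable_quantile m) measurableSet_Iio,
    Measure.restrict_apply (measurable_quantile m measurableSet_Iio)]
  rcases le_or_gt t 0 with ht0 | ht0
  · have hempty : quantile m ⁻¹' Iio t ∩ Ico 0 1 = ∅ :=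
      eq_empty_of_forall_notMem fun u ⟨hq, hu⟩ =>
        (quantile_nonneg m hu.1).not_gt (lt_of_lt_of_le hq ht0)
    rw [hempty, measure_empty]
    exact (measure_mono_null (Iio_subset_Iio ht0) (measure_Iio_zero_of_measure_Ico_eq_one hm)).symm
  rcases le_or_gt t 1 with ht1 | ht1
  · have hIco : quantile m ⁻¹' Iio t ∩ Ico 0 1 = Ico 0 (m.real (Iio t)) := by
      ext u
      simp only [mem_inter_iff, mem_preimage, mem_Iio, mem_Ico]
      constructor
      · rintro ⟨hq, hu0, -⟩
        exact ⟨hu0, (quantile_lt_iff hm hu0 ht1).1 hq⟩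
      · rintro ⟨hu0, hut⟩
        exact ⟨(quantile_lt_iff hm hu0 ht1).2 hut, hu0, hut.trans_le measureReal_le_one⟩
    rw [hIco, Real.volume_Ico, sub_zero, ofReal_measureReal]
  · have hIco : quantile m ⁻¹' Iio t ∩ Ico 0 1 = Ico 0 1 :=
      inter_eq_right.2 fun u hu => (quantile_mem_Ico hm hu).2.trans ht1
    rw [hIco, measure_Iio_eq_one_of_one_le hm ht1.le]
    simp

theorem cdf_quantile [NullSingletonClass m] (hm : m (Ico 0 1) = 1) {u : ℝ}
    (hu : u ∈ Ico (0 : ℝ) 1) : cdf m (quantile m u) = u := by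
  have hq := quantile_mem_Ico hm hu
  rw [cdf_eq_measureReal_Iio hm hq]
  refine le_antisymm (not_lt.1 fun h => ?_) (not_lt.1 fun h => ?_)
  · exact lt_irrefl _ ((quantile_lt_iff hm hu.1 hq.2.le).2 h)
  · have hIic : m (Iic (quantile m u)) < ENNReal.ofReal u := by
      rw [← measure_congr Iio_ae_eq_Iic, ← ofReal_measureReal]
      exact (ENNReal.ofReal_lt_ofReal_iff (measureReal_nonneg.trans_lt h)).2 h
    rw [measure_Iic_eq_iInf] at hIic
    obtain ⟨⟨t, hqt⟩, ht⟩ := iInf_lt_iff.1 hIic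
    have hmin : quantile m u < min t 1 := lt_min hqt hq.2
    have hle : m (Iio (min t 1)) < ENNReal.ofReal u :=
      (measure_mono (Iio_subset_Iio (min_le_left _ _))).trans_lt ht
    exact ((quantile_lt_iff hm hu.1 (min_le_right _ _)).1 hmin).not_gt
      (ENNReal.toReal_lt_of_lt_ofReal hle)

theorem map_cdf [NullSingletonClass m] (hm : m (Ico 0 1) = 1) :
    m.map (cdf m) = volume.restrict (Ico 0 1) := by
  calc m.map (cdf m) = ((volume.restrict (Ico (0 : ℝ) 1)).map (quantile m)).map (cdf m) := by
        rw [map_quantile hm]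
    _ = (volume.restrict (Ico (0 : ℝ) 1)).map id := by
        rw [Measure.map_map (measurable_cdf m) (measurable_quantile m)]
        exact Measure.map_congr <| ae_restrict_of_forall_mem measurableSet_Ico
          fun u hu => cdf_quantile hm hu
    _ = volume.restrict (Ico 0 1) := Measure.map_id

end Pushforwards

theorem lcotEmbed_invertible_general
    (μ ν : Measure ℝ) [IsProbabilityMeasure μ] [IsProbabilityMeasure ν]
    (hμ : μ (Ico 0 1) = 1) (hν : ν (Ico 0 1) = 1)
    (hac : μ ≪ volume)
    (α : ℝ) :
    ν = μ.map (fun x => Int.fract (lcotEmbed μ ν α x + x)) := by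
  have : NullSingletonClass μ := ⟨fun x => hac (Real.volume_singleton)⟩
  have hfactor : (fun x => Int.fract (lcotEmbed μ ν α x + x)) =
      quantile ν ∘ (fun v => Int.fract (v - α)) ∘ cdf μ := by
    funext x
    simp only [lcotEmbed, Function.comp_apply, sub_add_cancel, fract_quantile hν]
  have hrotate : Measurable fun v : ℝ => Int.fract (v - α) := (measurable_id.sub_const α).fract
  rw [hfactor, ← Measure.map_map (measurable_quantile ν) (hrotate.comp (measurable_cdf μ)),
    ← Measure.map_map hrotate (measurable_cdf μ), map_cdf hμ, map_fract_sub_volume_restrict_Ico,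
    map_quantile hν]

/-- Invertibility of the LCOT embedding: `ν = (ν̂^{μ,h} + id)_# μ`
(the sum being taken modulo ℤ, i.e. on the circle). -/
theorem lcotEmbed_invertible
    (h : ℝ → ℝ) (hconv : ConvexOn ℝ univ h)
    (hmono : MonotoneOn h (Ici 0)) (hnonneg : ∀ x, 0 ≤ h x)
    (μ ν : Measure ℝ) [IsProbabilityMeasure μ] [IsProbabilityMeasure ν]
    (hμ : μ (Ico 0 1) = 1) (hν : ν (Ico 0 1) = 1)
    (hac : μ ≪ volume)
    (α : ℝ) (hα : ∀ β : ℝ, shiftCost h μ ν α ≤ shiftCost h μ ν β) :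
    ν = μ.map (fun x => Int.fract (lcotEmbed μ ν α x + x)) :=
  lcotEmbed_invertible_general μ ν hμ hν hac α
end
end
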